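/- Assume the noise variables (M_i)_{i≥1} are independent and identically distributed with E[M_i] = 0, |M_i| ≤ m̄ almost surely, and Var(M_i) = σ̄². Then for every x ∈ 𝒳 and every t ≥ 1: ℙ( |f(x) − μ_t(x)| ≤ B·σ̃_t(x) + min{ √(2 ln(2/δ))·m̄·‖h_t(x)‖₂ , (2/3)·ln(2/δ)·m̄·‖h_t(x)‖_∞ + √(2 ln(2/δ))·σ̄·‖h_t(x)‖₂ } ) ≥ 1−δ. -/

import Mathlib

open MeasureTheory ProbabilityTheory Matrix Real
open scoped BigOperators ENNReal NNReal

noncomputable section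

namespace KRR

/-- Euclidean 2-norm on `Fin t → ℝ`. -/
def twoNorm {t : ℕ} (v : Fin t → ℝ) : ℝ := Real.sqrt (∑ i, v i ^ 2)

/-- Maximum norm on `Fin t → ℝ` (the sup norm of the Pi type). -/
def supNorm {t : ℕ} (v : Fin t → ℝ) : ℝ := ‖v‖

/-- Weighted norm `‖s‖_C = √(sᵀ C s)`. -/
def wNorm {t : ℕ} (C : Matrix (Fin t) (Fin t) ℝ) (v : Fin t → ℝ) : ℝ :=
  Real.sqrt (v ⬝ᵥ C.mulVec v)

/-- Spectral norm (maximal singular value, ℓ²-operator norm) of a square real matrix. -/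
def specNorm {t : ℕ} (C : Matrix (Fin t) (Fin t) ℝ) : ℝ :=
  ‖LinearMap.toContinuousLinearMap (Matrix.toEuclideanLin C)‖

/-- Covering number of `X ⊆ ℝ^n` with grid constant `ζ`: the minimal cardinality of a
finite subset of `X` such that every point of `X` is within distance `ζ` of it. -/
def covN {n : ℕ} (X : Set (EuclideanSpace ℝ (Fin n))) (ζ : ℝ) : ℕ :=
  sInf {m | ∃ S : Finset (EuclideanSpace ℝ (Fin n)), ↑S ⊆ X ∧ S.card = m ∧
    ∀ x ∈ X, ∃ y ∈ S, ‖x - y‖ ≤ ζ}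

variable {E : Type*} {H : Type*} [NormedAddCommGroup H] [InnerProductSpace ℝ H]

/-- The kernel `k(x,x') = ⟪φ(x), φ(x')⟫`. -/
def ker (φ : E → H) (x y : E) : ℝ := inner ℝ (φ x) (φ y)

/-- Gram matrix `K_t`. -/
def gram (φ : E → H) (xs : ℕ → E) (t : ℕ) : Matrix (Fin t) (Fin t) ℝ :=
  Matrix.of fun i j => ker φ (xs i) (xs j)

/-- The vector `k_t(x)`. -/
def kvec (φ : E → H) (xs : ℕ → E) (t : ℕ) (x : E) : Fin t → ℝ :=
  fun i => ker φ (xs i) x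

/-- `h_t(x) = (K_t + ρ²I)⁻¹ k_t(x)`. -/
def hvec (φ : E → H) (xs : ℕ → E) (ρ : ℝ) (t : ℕ) (x : E) : Fin t → ℝ :=
  (gram φ xs t + ρ ^ 2 • (1 : Matrix (Fin t) (Fin t) ℝ))⁻¹ *ᵥ kvec φ xs t x

/-- Posterior variance `σ_t²(x) = k(x,x) − k_t(x)ᵀ(K_t+ρ²I)⁻¹k_t(x)`. -/
def postVar (φ : E → H) (xs : ℕ → E) (ρ : ℝ) (t : ℕ) (x : E) : ℝ :=
  ker φ x x - kvec φ xs t x ⬝ᵥ hvec φ xs ρ t x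

/-- `σ̃_t(x) = √(σ_t²(x) − ρ²‖h_t(x)‖₂²)`. -/
def sigTilde (φ : E → H) (xs : ℕ → E) (ρ : ℝ) (t : ℕ) (x : E) : ℝ :=
  Real.sqrt (postVar φ xs ρ t x - ρ ^ 2 * twoNorm (hvec φ xs ρ t x) ^ 2)

/-- The unknown function `f(x) = ⟪w, φ(x)⟫`. -/
def ffun (φ : E → H) (w : H) (x : E) : ℝ := inner ℝ w (φ x)

/-- The KRR estimate `μ_t(x) = Σᵢ Yᵢ (h_t(x))ᵢ` with `Yᵢ = f(xᵢ) + Mᵢ`. -/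
def muEst {Ω : Type*} (φ : E → H) (xs : ℕ → E) (ρ : ℝ) (w : H)
    (M : ℕ → Ω → ℝ) (t : ℕ) (x : E) (ω : Ω) : ℝ :=
  ∑ i : Fin t, (ffun φ w (xs i) + M i ω) * hvec φ xs ρ t x i

/-- `β_{1,t} = 2 ln(4 π_t Z(ζ_t,X)/δ)`. -/
def beta1 {n : ℕ} (X : Set (EuclideanSpace ℝ (Fin n))) (pis ζ : ℕ → ℝ) (δ : ℝ) (t : ℕ) : ℝ :=
  2 * Real.log (4 * pis t * (covN X (ζ t) : ℝ) / δ)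

/-- `β_{2,t} = 2 ln(4 π_t t/δ)`. -/
def beta2 (pis : ℕ → ℝ) (δ : ℝ) (t : ℕ) : ℝ :=
  2 * Real.log (4 * pis t * (t : ℝ) / δ)

/-- `a_{1,t} = √(L/(2ρ²)) ζ_t^{p/2}`. -/
def a1 (L ρ p : ℝ) (ζ : ℕ → ℝ) (t : ℕ) : ℝ :=
  Real.sqrt (L / (2 * ρ ^ 2)) * ζ t ^ (p / 2)

/-- `a_{2,t} = t L ζ_t^p`. -/
def a2 (L p : ℝ) (ζ : ℕ → ℝ) (t : ℕ) : ℝ :=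
  (t : ℝ) * L * ζ t ^ p

/-- `Δ_t(σ) = √(β_{1,t}) σ a_{1,t} + √(β_{2,t}) σ a_{2,t}`. -/
def Δt {n : ℕ} (X : Set (EuclideanSpace ℝ (Fin n))) (pis ζ : ℕ → ℝ) (δ L ρ p : ℝ)
    (t : ℕ) (σ : ℝ) : ℝ :=
  Real.sqrt (beta1 X pis ζ δ t) * σ * a1 L ρ p ζ t + Real.sqrt (beta2 pis δ t) * σ * a2 L p ζ t

/-!
Write `h = h_t(x)`. The error splits as
`f(x) - μ_t(x) = ⟪w, φ(x) - ∑ hᵢ φ(xᵢ)⟫ - ∑ hᵢ Mᵢ`.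
Since `(K_t + ρ²I) h = k_t(x)`, expanding the square gives
`‖φ(x) - ∑ hᵢ φ(xᵢ)‖² = σ_t²(x) - ρ² ‖h‖₂² = σ̃_t(x)²`, so Cauchy–Schwarz bounds the first
term by `B σ̃_t(x)`. The second term is a sum of independent, centred, bounded variables:
Hoeffding's inequality bounds it by the first entry of the minimum and Bernstein's inequality
by the second, each with probability at least `1 - δ`; one applies whichever of the two is
smaller.
-/

open scoped Nat in
theorem _root_.Real.exp_le_one_add_add_sq_div_of_abs_le {y b : ℝ} (hy : |y| ≤ b) (hb : b < 3) :
    exp y ≤ 1 + y + y ^ 2 / (2 * (1 - b / 3)) := by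
  have hb0 : 0 ≤ b := (abs_nonneg y).trans hy
  have htail : HasSum (fun n ↦ y ^ (n + 2) / (n + 2)!) (exp y - (1 + y)) := by
    have := NormedSpace.expSeries_div_hasSum_exp y
    rw [← Real.exp_eq_exp_ℝ] at this
    simpa [Finset.sum_range_succ] using (hasSum_nat_add_iff' 2).mpr this
  -- `(n + 2)! ≥ 2 * 3 ^ n` bounds the tail of the exponential series by a geometric series
  have hgeom : HasSum (fun n ↦ y ^ 2 / 2 * (b / 3) ^ n) (y ^ 2 / 2 * (1 - b / 3)⁻¹) :=
    (hasSum_geometric_of_lt_one (by positivity) (by linarith)).mul_left _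
  have hterm (n : ℕ) : y ^ (n + 2) / (n + 2)! ≤ y ^ 2 / 2 * (b / 3) ^ n := by
    have hfact : (2 * 3 ^ n : ℝ) ≤ (n + 2)! := by
      rw [add_comm n 2]
      exact_mod_cast Nat.factorial_mul_pow_le_factorial (m := 2) (n := n)
    calc y ^ (n + 2) / (n + 2)! ≤ y ^ 2 * b ^ n / (2 * 3 ^ n) := by
          gcongr
          calc y ^ (n + 2) ≤ |y| ^ (n + 2) := (le_abs_self _).trans (abs_pow y _).le
            _ = y ^ 2 * |y| ^ n := by rw [pow_add, sq_abs, mul_comm]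
            _ ≤ y ^ 2 * b ^ n := by gcongr
      _ = y ^ 2 / 2 * (b / 3) ^ n := by rw [div_pow]; ring
  have := hasSum_le hterm htail hgeom
  rw [← div_eq_mul_inv, div_div] at this
  linarith

section Concentration

variable {Ω : Type*} [MeasurableSpace Ω] {μ : Measure Ω}

theorem _root_.MeasureTheory.measureReal_abs_gt_eq_zero {X : Ω → ℝ} (hX : X =ᵐ[μ] 0) {ε : ℝ}
    (hε : 0 ≤ ε) : μ.real {ω | ε < |X ω|} = 0 := by
  have hnull : μ {ω | ¬ X ω = (0 : Ω → ℝ) ω} = 0 := ae_iff.mp hX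
  have hsub : {ω | ε < |X ω|} ⊆ {ω | ¬ X ω = (0 : Ω → ℝ) ω} := fun ω (hω : ε < |X ω|) h0 ↦ by
    rw [h0, Pi.zero_apply, abs_zero] at hω
    linarith
  rw [measureReal_def, measure_mono_null hsub hnull, ENNReal.toReal_zero]

theorem _root_.MeasureTheory.measureReal_abs_gt_le_add [IsFiniteMeasure μ] (f : Ω → ℝ) (ε : ℝ) :
    μ.real {ω | ε < |f ω|} ≤ μ.real {ω | ε ≤ f ω} + μ.real {ω | ε ≤ -f ω} := by
  refine (measureReal_mono fun ω (hω : ε < |f ω|) ↦ ?_).trans (measureReal_union_le _ _)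
  rcases lt_abs.mp hω with h | h
  exacts [Or.inl h.le, Or.inr h.le]

variable [IsProbabilityMeasure μ]

theorem _root_.ProbabilityTheory.mgf_le_exp_of_abs_le {Y : Ω → ℝ} (hY : AEMeasurable Y μ)
    {c l : ℝ} (hb : ∀ᵐ ω ∂μ, |Y ω| ≤ c) (hmean : μ[Y] = 0) (hl : 0 ≤ l) (hlc : l * c < 3) :
    mgf Y μ l ≤ exp (l ^ 2 * (∫ ω, Y ω ^ 2 ∂μ) / (2 * (1 - l * c / 3))) := by
  set D := l ^ 2 / (2 * (1 - l * c / 3))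
  have hmem : MemLp Y 2 μ := MemLp.of_bound hY.aestronglyMeasurable c (by simpa using hb)
  have hexp : Integrable (fun ω ↦ exp (l * Y ω)) μ :=
    integrable_exp_mul_of_le l c hl hY (hb.mono fun ω h ↦ (le_abs_self _).trans h)
  have hlin : Integrable (fun ω ↦ 1 + l * Y ω) μ :=
    (integrable_const 1).add ((hmem.integrable one_le_two).const_mul l)
  have hsq : Integrable (fun ω ↦ D * Y ω ^ 2) μ := hmem.integrable_sq.const_mul D
  have hpt : ∀ᵐ ω ∂μ, exp (l * Y ω) ≤ 1 + l * Y ω + D * Y ω ^ 2 := by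
    filter_upwards [hb] with ω hω
    refine (Real.exp_le_one_add_add_sq_div_of_abs_le (y := l * Y ω) ?_ hlc).trans_eq ?_
    · rw [abs_mul, abs_of_nonneg hl]
      exact mul_le_mul_of_nonneg_left hω hl
    · ring
  calc mgf Y μ l ≤ ∫ ω, (1 + l * Y ω + D * Y ω ^ 2) ∂μ :=
        integral_mono_ae hexp (hlin.add hsq) hpt
    _ = 1 + D * ∫ ω, Y ω ^ 2 ∂μ := by
      rw [integral_add hlin hsq, integral_add (integrable_const 1)
        ((hmem.integrable one_le_two).const_mul l), integral_const_mul, integral_const_mul]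
      simp [hmean]
    _ ≤ exp (D * ∫ ω, Y ω ^ 2 ∂μ) := by linarith [add_one_le_exp (D * ∫ ω, Y ω ^ 2 ∂μ)]
    _ = exp (l ^ 2 * (∫ ω, Y ω ^ 2 ∂μ) / (2 * (1 - l * c / 3))) := by
      rw [mul_div_right_comm]

theorem _root_.ProbabilityTheory.measureReal_sum_ge_le_bernstein {ι : Type*} [Fintype ι]
    {Y : ι → Ω → ℝ} (hind : iIndepFun Y μ) (hmeas : ∀ i, Measurable (Y i)) {c v ε : ℝ}
    (hc : 0 ≤ c) (hb : ∀ i, ∀ᵐ ω ∂μ, |Y i ω| ≤ c) (hmean : ∀ i, μ[Y i] = 0) (hv : 0 < v)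
    (hvar : ∑ i, ∫ ω, Y i ω ^ 2 ∂μ ≤ v) (hε : 0 ≤ ε) :
    μ.real {ω | ε ≤ ∑ i, Y i ω} ≤ exp (-ε ^ 2 / (2 * (v + c * ε / 3))) := by
  have hD : 0 < v + c * ε / 3 := by positivity
  -- the Chernoff parameter minimising the resulting exponent
  set l := ε / (v + c * ε / 3)
  have hl : 0 ≤ l := by positivity
  have hone : 1 - l * c / 3 = v / (v + c * ε / 3) := by
    simp only [l]
    field_simp
    ring
  have hlc : l * c < 3 := by
    have : 0 < v / (v + c * ε / 3) := by positivity
    linarith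
  have hmgf : mgf (∑ i, Y i) μ l ≤ exp (l ^ 2 * v / (2 * (1 - l * c / 3))) := by
    rw [hind.mgf_sum hmeas]
    calc ∏ i, mgf (Y i) μ l
        ≤ ∏ i, exp (l ^ 2 * (∫ ω, Y i ω ^ 2 ∂μ) / (2 * (1 - l * c / 3))) :=
          Finset.prod_le_prod (fun _ _ ↦ mgf_nonneg) fun i _ ↦
            mgf_le_exp_of_abs_le (hmeas i).aemeasurable (hb i) (hmean i) hl hlc
      _ ≤ exp (l ^ 2 * v / (2 * (1 - l * c / 3))) := by
        rw [← Real.exp_sum, ← Finset.sum_div, ← Finset.mul_sum, hone]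
        gcongr
  have hint : Integrable (fun ω ↦ exp (l * (∑ i, Y i) ω)) μ :=
    hind.integrable_exp_mul_sum hmeas fun i _ ↦ integrable_exp_mul_of_le l c hl
      (hmeas i).aemeasurable ((hb i).mono fun ω h ↦ (le_abs_self _).trans h)
  calc μ.real {ω | ε ≤ ∑ i, Y i ω} = μ.real {ω | ε ≤ (∑ i, Y i) ω} := by
        simp only [Finset.sum_apply]
    _ ≤ exp (-l * ε) * mgf (∑ i, Y i) μ l := measure_ge_le_exp_mul_mgf ε hl hint
    _ ≤ exp (-l * ε) * exp (l ^ 2 * v / (2 * (1 - l * c / 3))) := by gcongr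
    _ = exp (-ε ^ 2 / (2 * (v + c * ε / 3))) := by
      rw [← Real.exp_add, hone]
      congr 1
      simp only [l]
      field_simp
      ring

theorem _root_.ProbabilityTheory.HasSubgaussianMGF.measureReal_abs_gt_le {X : Ω → ℝ} {c : ℝ≥0}
    (h : HasSubgaussianMGF X c μ) {ε L : ℝ} (hε : 0 ≤ ε) (hlevel : 2 * c * L ≤ ε ^ 2) :
    μ.real {ω | ε < |X ω|} ≤ 2 * exp (-L) := by
  rcases eq_zero_or_pos c with hc | hc
  · subst hc
    rw [measureReal_abs_gt_eq_zero h.ae_eq_zero_of_hasSubgaussianMGF_zero hε]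
    positivity
  have htail : exp (-ε ^ 2 / (2 * c)) ≤ exp (-L) := by
    rw [exp_le_exp, neg_div, neg_le_neg_iff, le_div_iff₀ (by positivity)]
    linarith
  calc μ.real {ω | ε < |X ω|} ≤ μ.real {ω | ε ≤ X ω} + μ.real {ω | ε ≤ -X ω} :=
        measureReal_abs_gt_le_add X ε
    _ ≤ exp (-L) + exp (-L) :=
        add_le_add ((h.measure_ge_le hε).trans htail) ((h.neg.measure_ge_le hε).trans htail)
    _ = 2 * exp (-L) := by ring

theorem _root_.ProbabilityTheory.hasSubgaussianMGF_of_abs_le {X : Ω → ℝ} (hX : AEMeasurable X μ)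
    {c : ℝ} (hb : ∀ᵐ ω ∂μ, |X ω| ≤ c) (hmean : μ[X] = 0) :
    HasSubgaussianMGF X (‖c‖₊ ^ 2) μ := by
  convert hasSubgaussianMGF_of_mem_Icc_of_integral_eq_zero hX
    (hb.mono fun ω h ↦ Set.mem_Icc.mpr (abs_le.mp h)) hmean using 2
  ext
  simp [← two_mul]

theorem _root_.ProbabilityTheory.measureReal_abs_sum_gt_le_bernstein {ι : Type*} [Fintype ι]
    {Y : ι → Ω → ℝ} (hind : iIndepFun Y μ) (hmeas : ∀ i, Measurable (Y i)) {c ε L : ℝ}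
    (hc : 0 ≤ c) (hb : ∀ i, ∀ᵐ ω ∂μ, |Y i ω| ≤ c) (hmean : ∀ i, μ[Y i] = 0) (hε : 0 ≤ ε)
    (hlevel : 2 * L * (∑ i, ∫ ω, Y i ω ^ 2 ∂μ + c * ε / 3) ≤ ε ^ 2) :
    μ.real {ω | ε < |∑ i, Y i ω|} ≤ 2 * exp (-L) := by
  have hsq (i : ι) : Integrable (fun ω ↦ Y i ω ^ 2) μ :=
    (MemLp.of_bound (hmeas i).aestronglyMeasurable c (by simpa using hb i)).integrable_sq
  have hsq_nonneg (i : ι) : 0 ≤ ∫ ω, Y i ω ^ 2 ∂μ := integral_nonneg fun ω ↦ sq_nonneg _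
  rcases (Finset.sum_nonneg fun i _ ↦ hsq_nonneg i).eq_or_lt with hv | hv
  · have hzero (i : ι) : Y i =ᵐ[μ] 0 := by
      have := (Finset.sum_eq_zero_iff_of_nonneg fun i _ ↦ hsq_nonneg i).mp hv.symm i
        (Finset.mem_univ i)
      filter_upwards [(integral_eq_zero_iff_of_nonneg (fun ω ↦ sq_nonneg _) (hsq i)).mp this]
        with ω hω
      simpa using hω
    have hsum : (fun ω ↦ ∑ i, Y i ω) =ᵐ[μ] 0 := by
      filter_upwards [ae_all_iff.mpr hzero] with ω hω
      simp [hω]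
    rw [measureReal_abs_gt_eq_zero hsum hε]
    positivity
  have htail : exp (-ε ^ 2 / (2 * (∑ i, ∫ ω, Y i ω ^ 2 ∂μ + c * ε / 3))) ≤ exp (-L) := by
    rw [exp_le_exp, neg_div, neg_le_neg_iff, le_div_iff₀ (by positivity)]
    linarith
  have hind_neg : iIndepFun (fun i ↦ Neg.neg ∘ Y i) μ :=
    hind.comp (fun _ ↦ Neg.neg) fun _ ↦ measurable_neg
  have hright := measureReal_sum_ge_le_bernstein hind hmeas hc hb hmean hv le_rfl hε
  have hleft := measureReal_sum_ge_le_bernstein hind_neg (fun i ↦ (hmeas i).neg) hc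
    (fun i ↦ by simpa using hb i) (fun i ↦ by simp [integral_neg, hmean i]) hv
    (by simp) hε
  simp only [Function.comp_apply, Finset.sum_neg_distrib] at hleft
  calc μ.real {ω | ε < |∑ i, Y i ω|}
      ≤ μ.real {ω | ε ≤ ∑ i, Y i ω} + μ.real {ω | ε ≤ -∑ i, Y i ω} :=
        measureReal_abs_gt_le_add _ ε
    _ ≤ exp (-L) + exp (-L) := add_le_add (hright.trans htail) (hleft.trans htail)
    _ = 2 * exp (-L) := by ring

theorem _root_.MeasureTheory.ofReal_one_sub_le_of_measureReal_compl_le {s : Set Ω} {δ : ℝ}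
    (h : μ.real sᶜ ≤ δ) : ENNReal.ofReal (1 - δ) ≤ μ s := by
  have hcover : 1 ≤ μ.real s + μ.real sᶜ := by
    calc (1 : ℝ) = μ.real (s ∪ sᶜ) := by simp
      _ ≤ μ.real s + μ.real sᶜ := measureReal_union_le _ _
  rw [ENNReal.ofReal_le_iff_le_toReal (measure_ne_top μ s)]
  change 1 - δ ≤ μ.real s
  linarith

end Concentration

section Noise

variable {Ω : Type*} [MeasurableSpace Ω] {μ : Measure Ω} [IsProbabilityMeasure μ] {ι : Type*}
  [Fintype ι] {M : ι → Ω → ℝ} {m σ : ℝ}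

theorem measureReal_abs_sum_mul_gt_le_hoeffding (hind : iIndepFun M μ)
    (hmeas : ∀ i, Measurable (M i)) (hm : 0 ≤ m) (hb : ∀ i, ∀ᵐ ω ∂μ, |M i ω| ≤ m)
    (hmean : ∀ i, μ[M i] = 0) (g : ι → ℝ) {L : ℝ} (hL : 0 ≤ L) :
    μ.real {ω | √(2 * L) * m * √(∑ i, g i ^ 2) < |∑ i, g i * M i ω|} ≤ 2 * exp (-L) := by
  have hsub (i : ι) : HasSubgaussianMGF (fun ω ↦ g i * M i ω) (‖|g i| * m‖₊ ^ 2) μ := by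
    refine hasSubgaussianMGF_of_abs_le ((hmeas i).const_mul (g i)).aemeasurable ?_
      (by simp [integral_const_mul, hmean i])
    filter_upwards [hb i] with ω hω
    rw [abs_mul]
    gcongr
  refine (HasSubgaussianMGF.sum_of_iIndepFun (hind.comp (fun i ↦ (g i * ·))
    fun i ↦ measurable_const_mul (g i)) fun i _ ↦ hsub i).measureReal_abs_gt_le
    (by positivity) (le_of_eq ?_)
  rw [mul_pow, mul_pow, sq_sqrt (by positivity), sq_sqrt (by positivity)]
  push_cast
  simp only [Real.norm_eq_abs, sq_abs, mul_pow, ← Finset.sum_mul]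
  ring

theorem measureReal_abs_sum_mul_gt_le_bernstein (hind : iIndepFun M μ)
    (hmeas : ∀ i, Measurable (M i)) (hm : 0 ≤ m) (hσ : 0 ≤ σ) (hb : ∀ i, ∀ᵐ ω ∂μ, |M i ω| ≤ m)
    (hmean : ∀ i, μ[M i] = 0) (hvar : ∀ i, variance (M i) μ = σ ^ 2) (g : ι → ℝ) {L : ℝ}
    (hL : 0 ≤ L) :
    μ.real {ω | 2 / 3 * L * m * ‖g‖ + √(2 * L) * σ * √(∑ i, g i ^ 2) < |∑ i, g i * M i ω|} ≤
      2 * exp (-L) := by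
  have hsq (i : ι) : ∫ ω, (g i * M i ω) ^ 2 ∂μ = g i ^ 2 * σ ^ 2 := by
    rw [← hvar i, variance_of_integral_eq_zero (hmeas i).aemeasurable (hmean i),
      ← integral_const_mul]
    simp only [mul_pow]
  set a := 2 / 3 * L * m * ‖g‖
  set s := √(2 * L) * σ * √(∑ i, g i ^ 2)
  have hs : s ^ 2 = 2 * L * (∑ i, g i ^ 2 * σ ^ 2) := by
    simp only [s]
    rw [mul_pow, mul_pow, sq_sqrt (by positivity), sq_sqrt (by positivity), ← Finset.sum_mul]
    ring
  have ha : 0 ≤ a := by positivity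
  have hs0 : 0 ≤ s := by positivity
  have hac : 2 * L * (m * ‖g‖ * (a + s) / 3) = a * (a + s) := by
    simp only [a]
    ring
  have hbern := measureReal_abs_sum_gt_le_bernstein (hind.comp (fun i ↦ (g i * ·))
    fun i ↦ measurable_const_mul (g i)) (fun i ↦ (hmeas i).const_mul (g i))
    (c := m * ‖g‖) (ε := a + s) (L := L) (by positivity) (fun i ↦ ?_) (fun i ↦ ?_)
    (by positivity) ?_
  · simpa only [Function.comp_apply] using hbern
  · filter_upwards [hb i] with ω hω
    rw [Function.comp_apply, abs_mul, mul_comm m]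
    exact mul_le_mul (norm_le_pi_norm g i) hω (abs_nonneg _) (norm_nonneg g)
  · simp [integral_const_mul, hmean i]
  · simp only [Function.comp_apply, hsq]
    -- `(a + s) ^ 2 - 2 L (v + c (a + s) / 3) = a s`, since `s ^ 2 = 2 L v` and `a = 2 L c / 3`
    nlinarith [mul_nonneg ha hs0]

theorem measureReal_abs_sum_mul_gt_min_le (hind : iIndepFun M μ)
    (hmeas : ∀ i, Measurable (M i)) (hm : 0 ≤ m) (hσ : 0 ≤ σ) (hb : ∀ i, ∀ᵐ ω ∂μ, |M i ω| ≤ m)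
    (hmean : ∀ i, μ[M i] = 0) (hvar : ∀ i, variance (M i) μ = σ ^ 2) (g : ι → ℝ) {δ : ℝ}
    (hδ : 0 < δ) (hδ2 : δ ≤ 2) :
    μ.real {ω | min (√(2 * log (2 / δ)) * m * √(∑ i, g i ^ 2))
        (2 / 3 * log (2 / δ) * m * ‖g‖ + √(2 * log (2 / δ)) * σ * √(∑ i, g i ^ 2)) <
        |∑ i, g i * M i ω|} ≤ δ := by
  have hL : 0 ≤ log (2 / δ) := log_nonneg (by rw [le_div_iff₀ hδ]; linarith)
  have hδ_eq : 2 * exp (-log (2 / δ)) = δ := by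
    rw [exp_neg, exp_log (by positivity), inv_div]
    field_simp
  refine le_of_le_of_eq ?_ hδ_eq
  rcases min_choice (√(2 * log (2 / δ)) * m * √(∑ i, g i ^ 2))
    (2 / 3 * log (2 / δ) * m * ‖g‖ + √(2 * log (2 / δ)) * σ * √(∑ i, g i ^ 2)) with h | h <;>
    rw [h]
  · exact measureReal_abs_sum_mul_gt_le_hoeffding hind hmeas hm hb hmean g hL
  · exact measureReal_abs_sum_mul_gt_le_bernstein hind hmeas hm hσ hb hmean hvar g hL

end Noise

section Deterministic

variable (φ : E → H) (xs : ℕ → E) {ρ : ℝ} (t : ℕ) (x : E)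

theorem posDef_gram_add_smul_one (hρ : ρ ≠ 0) :
    (gram φ xs t + ρ ^ 2 • (1 : Matrix (Fin t) (Fin t) ℝ)).PosDef :=
  PosDef.posSemidef_add (posSemidef_gram ℝ fun i : Fin t ↦ φ (xs i))
    (PosDef.one.smul (by positivity))

theorem gram_add_smul_one_mulVec_hvec (hρ : ρ ≠ 0) :
    (gram φ xs t + ρ ^ 2 • (1 : Matrix (Fin t) (Fin t) ℝ)) *ᵥ hvec φ xs ρ t x = kvec φ xs t x := by
  rw [hvec, mulVec_mulVec, mul_nonsing_inv _ ((isUnit_iff_isUnit_det _).mp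
    (posDef_gram_add_smul_one φ xs t hρ).isUnit), one_mulVec]

theorem norm_sub_sum_hvec_smul_sq (hρ : ρ ≠ 0) :
    ‖φ x - ∑ i, hvec φ xs ρ t x i • φ (xs i)‖ ^ 2 =
      postVar φ xs ρ t x - ρ ^ 2 * twoNorm (hvec φ xs ρ t x) ^ 2 := by
  set h := hvec φ xs ρ t x
  have hgram : gram φ xs t *ᵥ h = kvec φ xs t x - ρ ^ 2 • h := by
    rw [eq_sub_iff_add_eq, ← gram_add_smul_one_mulVec_hvec φ xs t x hρ, add_mulVec,
      smul_mulVec, one_mulVec]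
  have hquad : ‖∑ i, h i • φ (xs i)‖ ^ 2 = h ⬝ᵥ gram φ xs t *ᵥ h := by
    rw [← real_inner_self_eq_norm_sq, ← star_trivial h, gram,
      ← star_dotProduct_gram_mulVec (𝕜 := ℝ) (fun i : Fin t ↦ φ (xs i))]
    rfl
  have hcross : inner ℝ (φ x) (∑ i, h i • φ (xs i)) = kvec φ xs t x ⬝ᵥ h := by
    simp only [inner_sum, real_inner_smul_right, dotProduct, kvec, ker, real_inner_comm, mul_comm]
  have htwo : twoNorm h ^ 2 = h ⬝ᵥ h := by
    rw [twoNorm, sq_sqrt (by positivity)]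
    simp only [dotProduct, sq]
  rw [norm_sub_sq_real, hquad, hcross, hgram, htwo, postVar, ker, real_inner_self_eq_norm_sq,
    dotProduct_sub, dotProduct_smul, smul_eq_mul, dotProduct_comm h]
  ring

theorem sigTilde_eq_norm (hρ : ρ ≠ 0) :
    sigTilde φ xs ρ t x = ‖φ x - ∑ i, hvec φ xs ρ t x i • φ (xs i)‖ := by
  rw [sigTilde, ← norm_sub_sum_hvec_smul_sq φ xs t x hρ, sqrt_sq (norm_nonneg _)]

theorem abs_ffun_sub_sum_le (hρ : ρ ≠ 0) {B : ℝ} {w : H} (hw : ‖w‖ ≤ B) :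
    |ffun φ w x - ∑ i : Fin t, ffun φ w (xs i) * hvec φ xs ρ t x i| ≤
      B * sigTilde φ xs ρ t x := by
  have hinner : ffun φ w x - ∑ i : Fin t, ffun φ w (xs i) * hvec φ xs ρ t x i =
      inner ℝ w (φ x - ∑ i, hvec φ xs ρ t x i • φ (xs i)) := by
    simp only [inner_sub_right, inner_sum, real_inner_smul_right, ffun, mul_comm]
  rw [hinner, sigTilde_eq_norm φ xs t x hρ]
  exact (abs_real_inner_le_norm _ _).trans (by gcongr)

theorem ffun_sub_muEst {Ω : Type*} (w : H) (M : ℕ → Ω → ℝ) (ω : Ω) :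
    ffun φ w x - muEst φ xs ρ w M t x ω =
      (ffun φ w x - ∑ i : Fin t, ffun φ w (xs i) * hvec φ xs ρ t x i) -
        ∑ i : Fin t, hvec φ xs ρ t x i * M i ω := by
  simp only [muEst, add_mul, Finset.sum_add_distrib, mul_comm (M _ ω)]
  ring

end Deterministic

theorem stmt9_general
    {nx : ℕ} (X : Set (EuclideanSpace ℝ (Fin nx)))
    {H : Type*} [NormedAddCommGroup H] [InnerProductSpace ℝ H]
    (φ : EuclideanSpace ℝ (Fin nx) → H) (xs : ℕ → EuclideanSpace ℝ (Fin nx))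
    (ρ : ℝ) (hρ : 0 < ρ)
    (B : ℝ) (w : H) (hw : ‖w‖ ≤ B)
    {Ω : Type*} [MeasurableSpace Ω] (P : Measure Ω) [IsProbabilityMeasure P]
    (M : ℕ → Ω → ℝ) (hMmeas : ∀ i, Measurable (M i))
    (δ : ℝ) (hδ : δ ∈ Set.Ioo (0 : ℝ) 1)
    (mbar σbar : ℝ) (hmbar : 0 ≤ mbar) (hσbar : 0 ≤ σbar)
    (hindep : iIndepFun M P)
    (hmean : ∀ i, (∫ ω, M i ω ∂P) = 0)
    (hbdd : ∀ i, ∀ᵐ ω ∂P, |M i ω| ≤ mbar)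
    (hvar : ∀ i, variance (M i) P = σbar ^ 2) :
    ∀ x ∈ X, ∀ t : ℕ, 1 ≤ t →
      ENNReal.ofReal (1 - δ) ≤
        P {ω | |ffun φ w x - muEst φ xs ρ w M t x ω| ≤
          B * sigTilde φ xs ρ t x +
            min (Real.sqrt (2 * Real.log (2 / δ)) * mbar * twoNorm (hvec φ xs ρ t x))
              ((2 / 3) * Real.log (2 / δ) * mbar * supNorm (hvec φ xs ρ t x) +
                Real.sqrt (2 * Real.log (2 / δ)) * σbar * twoNorm (hvec φ xs ρ t x))} := by
  intro x _ t _
  have hnoise := measureReal_abs_sum_mul_gt_min_le (M := fun i : Fin t ↦ M i)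
    (hindep.precomp Fin.val_injective) (fun i ↦ hMmeas i) hmbar hσbar (fun i ↦ hbdd i)
    (fun i ↦ hmean i) (fun i ↦ hvar i) (hvec φ xs ρ t x) hδ.1 (by linarith [hδ.2])
  refine ofReal_one_sub_le_of_measureReal_compl_le ((measureReal_mono fun ω hω ↦ ?_).trans hnoise)
  have hdet := abs_ffun_sub_sum_le φ xs t x hρ.ne' hw
  simp only [Set.mem_compl_iff, Set.mem_ofPred_eq, not_le, twoNorm, supNorm,
    ffun_sub_muEst] at hω ⊢
  linarith [abs_sub (ffun φ w x - ∑ i : Fin t, ffun φ w (xs i) * hvec φ xs ρ t x i)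
    (∑ i : Fin t, hvec φ xs ρ t x i * M i ω)]

/-- Theorem 3(b): nonuniform error bound under i.i.d. bounded noise. -/
theorem stmt9
    {nx : ℕ} (hnx : 1 ≤ nx)
    (X : Set (EuclideanSpace ℝ (Fin nx))) (hXne : X.Nonempty) (hXcpt : IsCompact X)
    {H : Type*} [NormedAddCommGroup H] [InnerProductSpace ℝ H] [CompleteSpace H]
    (φ : EuclideanSpace ℝ (Fin nx) → H)
    (xs : ℕ → EuclideanSpace ℝ (Fin nx)) (hxs : ∀ i, xs i ∈ X)
    (ρ : ℝ) (hρ : 0 < ρ)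
    (B : ℝ) (hB : 0 ≤ B) (w : H) (hw : ‖w‖ ≤ B)
    {Ω : Type*} [MeasurableSpace Ω] (P : Measure Ω) [IsProbabilityMeasure P]
    (M : ℕ → Ω → ℝ) (hMmeas : ∀ i, Measurable (M i))
    (δ : ℝ) (hδ : δ ∈ Set.Ioo (0 : ℝ) 1)
    (mbar σbar : ℝ) (hmbar : 0 ≤ mbar) (hσbar : 0 ≤ σbar)
    (hindep : iIndepFun M P)
    (hident : ∀ i j, IdentDistrib (M i) (M j) P P)
    (hmean : ∀ i, (∫ ω, M i ω ∂P) = 0)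
    (hbdd : ∀ i, ∀ᵐ ω ∂P, |M i ω| ≤ mbar)
    (hvar : ∀ i, variance (M i) P = σbar ^ 2) :
    ∀ x ∈ X, ∀ t : ℕ, 1 ≤ t →
      ENNReal.ofReal (1 - δ) ≤
        P {ω | |ffun φ w x - muEst φ xs ρ w M t x ω| ≤
          B * sigTilde φ xs ρ t x +
            min (Real.sqrt (2 * Real.log (2 / δ)) * mbar * twoNorm (hvec φ xs ρ t x))
              ((2 / 3) * Real.log (2 / δ) * mbar * supNorm (hvec φ xs ρ t x) +
                Real.sqrt (2 * Real.log (2 / δ)) * σbar * twoNorm (hvec φ xs ρ t x))} :=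
  stmt9_general X φ xs ρ hρ B w hw P M hMmeas δ hδ mbar σbar hmbar hσbar hindep hmean hbdd hvar

end KRR
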